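/- arXiv:math/0209097 — 5 statements merged into one kernel-verified Lean document; each statement's English description precedes it below -/
import Mathlib

section
/- Let f be holomorphic on a neighborhood of z₀ ∈ ℂ, and suppose z₀ is a zero of order n−1 of f′ (with n ≥ 2). Then there exist holomorphic local diffeomorphisms φ and ψ defined near f(z₀) and z₀ respectively, with φ(0) = f(z₀) and ψ(z₀) = 0, such that f = φ ∘ (w ↦ wⁿ) ∘ ψ on a neighborhood of z₀. -/
open Filter Topology

/-! Subtracting `f z₀`, the conditions on the derivatives say that `f - f z₀` vanishes to order
exactly `n` at `z₀`, so `f z - f z₀ = (z - z₀) ^ n * g z` with `g` analytic and `g z₀ ≠ 0`.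
An analytic `n`-th root `h` of `g` gives `ψ z = (z - z₀) * h z`, and `φ` is translation by
`f z₀`. -/

theorem iteratedDeriv_sub_const_of_pos {𝕜 F : Type*} [NontriviallyNormedField 𝕜]
    [NormedAddCommGroup F] [NormedSpace 𝕜 F] {f : 𝕜 → F} {x : 𝕜} {k : ℕ} (hk : 0 < k) (c : F) :
    iteratedDeriv k (fun z => f z - c) x = iteratedDeriv k f x := by
  obtain ⟨m, rfl⟩ := Nat.exists_eq_add_of_lt hk
  have hderiv : deriv (fun z => f z - c) = deriv f := funext fun _ => deriv_sub_const c
  rw [iteratedDeriv_succ', iteratedDeriv_succ', hderiv]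

theorem AnalyticAt.analyticOrderAt_sub_eq_of_iteratedDeriv {𝕜 E : Type*}
    [NontriviallyNormedField 𝕜] [CharZero 𝕜] [NormedAddCommGroup E] [NormedSpace 𝕜 E]
    [CompleteSpace E] {f : 𝕜 → E} {z₀ : 𝕜} {n : ℕ} (hf : AnalyticAt 𝕜 f z₀) (hn : n ≠ 0)
    (hzero : ∀ k, 1 ≤ k → k < n → iteratedDeriv k f z₀ = 0)
    (hne : iteratedDeriv n f z₀ ≠ 0) :
    analyticOrderAt (fun z => f z - f z₀) z₀ = n := by
  rw [analyticOrderAt_eq_nat_iff_iteratedDeriv_eq_zero (hf.fun_sub analyticAt_const),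
    iteratedDeriv_sub_const_of_pos (Nat.pos_of_ne_zero hn)]
  refine ⟨fun k hk => ?_, hne⟩
  rcases Nat.eq_zero_or_pos k with rfl | hk₀
  · simp
  · rw [iteratedDeriv_sub_const_of_pos hk₀]
    exact hzero k hk₀ hk

theorem AnalyticAt.exists_pow_eq {g : ℂ → ℂ} {z₀ : ℂ} (hg : AnalyticAt ℂ g z₀)
    (hg₀ : g z₀ ≠ 0) {n : ℕ} (hn : n ≠ 0) :
    ∃ h : ℂ → ℂ, AnalyticAt ℂ h z₀ ∧ h z₀ ≠ 0 ∧ ∀ z, h z ^ n = g z := by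
  obtain ⟨c, hc⟩ := IsAlgClosed.exists_pow_nat_eq (g z₀) (Nat.pos_of_ne_zero hn)
  have hc₀ : c ≠ 0 := by rintro rfl; exact hg₀ (by rw [← hc, zero_pow hn])
  -- `g z / g z₀` is `1` at `z₀`, inside the slit plane where the principal power is analytic.
  refine ⟨fun z => c * (g z / g z₀) ^ (n⁻¹ : ℂ), ?_, by simpa [hg₀] using hc₀, fun z => ?_⟩
  · exact analyticAt_const.mul ((hg.div analyticAt_const hg₀).cpow analyticAt_const
      (by simp [hg₀]))
  · rw [mul_pow, Complex.cpow_nat_inv_pow _ hn, hc, mul_div_cancel₀ _ hg₀]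

theorem AnalyticAt.exists_eventuallyEq_pow_of_analyticOrderAt_eq {F : ℂ → ℂ} {z₀ : ℂ} {n : ℕ}
    (hF : AnalyticAt ℂ F z₀) (hn : n ≠ 0) (hord : analyticOrderAt F z₀ = n) :
    ∃ ψ : ℂ → ℂ, AnalyticAt ℂ ψ z₀ ∧ ψ z₀ = 0 ∧ deriv ψ z₀ ≠ 0 ∧
      ∀ᶠ z in 𝓝 z₀, F z = ψ z ^ n := by
  obtain ⟨g, hg, hg₀, hFg⟩ := hF.analyticOrderAt_eq_natCast.mp hord
  obtain ⟨h, hh, hh₀, hpow⟩ := hg.exists_pow_eq hg₀ hn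
  have hψ : HasDerivAt (fun z => (z - z₀) * h z) (h z₀) z₀ := by
    simpa using ((hasDerivAt_id z₀).sub_const z₀).fun_mul hh.differentiableAt.hasDerivAt
  refine ⟨fun z => (z - z₀) * h z, (analyticAt_id.sub analyticAt_const).mul hh, by simp,
    hψ.deriv ▸ hh₀, ?_⟩
  filter_upwards [hFg] with z hz
  rw [hz, mul_pow, hpow, smul_eq_mul]

theorem stmt_0 (f : ℂ → ℂ) (z₀ : ℂ) (n : ℕ) (hn : 2 ≤ n)
    (hf : AnalyticAt ℂ f z₀)
    (hzero : ∀ k, 1 ≤ k → k < n → iteratedDeriv k f z₀ = 0)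
    (hne : iteratedDeriv n f z₀ ≠ 0) :
    ∃ φ ψ : ℂ → ℂ, AnalyticAt ℂ φ 0 ∧ AnalyticAt ℂ ψ z₀ ∧
      φ 0 = f z₀ ∧ ψ z₀ = 0 ∧ deriv φ 0 ≠ 0 ∧ deriv ψ z₀ ≠ 0 ∧
      ∀ᶠ z in 𝓝 z₀, f z = φ ((ψ z) ^ n) := by
  have hn₀ : n ≠ 0 := by omega
  obtain ⟨ψ, hψ, hψ₀, hψ', hfψ⟩ :=
    (hf.fun_sub analyticAt_const).exists_eventuallyEq_pow_of_analyticOrderAt_eq hn₀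
      (hf.analyticOrderAt_sub_eq_of_iteratedDeriv hn₀ hzero hne)
  refine ⟨fun w => f z₀ + w, ψ, analyticAt_const.add analyticAt_id, hψ, by simp, hψ₀,
    by simp, hψ', ?_⟩
  filter_upwards [hfψ] with z hz
  rw [← hz, add_sub_cancel]
end

section
/- Let F : ℝ² → ℝ² be a proper C¹ map with critical set C = {p : det DF(p) = 0}, and assume every fiber of F is finite. Then the function w ↦ card(F⁻¹(w)) is locally constant on ℝ² \ F(C); in particular it is constant on each connected component of ℝ² \ F(C). -/
/-!
By the inverse function theorem `F` is a local homeomorphism at every regular point, in particular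
at every point over `(F '' C)ᶜ`. A proper map is closed, and a closed local homeomorphism with
finite fibers is a covering map over that set; the fibers of a covering map are locally all
homeomorphic to each other, so their cardinality is locally constant, hence constant on connected
components.
-/

open Filter Topology

theorem ContDiff.isLocalHomeomorphOn_det_fderiv_ne_zero {𝕜 E : Type*} [RCLike 𝕜]
    [NormedAddCommGroup E] [NormedSpace 𝕜 E] [FiniteDimensional 𝕜 E] {f : E → E}
    (hf : ContDiff 𝕜 1 f) : IsLocalHomeomorphOn f {p | (fderiv 𝕜 f p).det ≠ 0} := by
  have := FiniteDimensional.complete 𝕜 E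
  intro p hp
  have hstrict : HasStrictFDerivAt f
      ((fderiv 𝕜 f p).toContinuousLinearEquivOfDetNeZero hp : E →L[𝕜] E) p := by
    rw [ContinuousLinearMap.coe_toContinuousLinearEquivOfDetNeZero]
    exact hf.contDiffAt.hasStrictFDerivAt one_ne_zero
  exact ⟨hstrict.toOpenPartialHomeomorph f, hstrict.mem_toOpenPartialHomeomorph_source, rfl⟩

namespace IsEvenlyCovered

variable {E X I : Type*} [TopologicalSpace E] [TopologicalSpace X] [TopologicalSpace I]
  {f : E → X} {x : X}

theorem eventually_isEvenlyCovered (h : IsEvenlyCovered f x I) :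
    ∀ᶠ y in 𝓝 x, IsEvenlyCovered f y I := by
  obtain ⟨hI, U, hxU, hU, hfU, H, hH⟩ := h
  filter_upwards [hU.mem_nhds hxU] with y hyU using ⟨hI, U, hyU, hU, hfU, H, hH⟩

theorem eventually_natCard_preimage_singleton_eq (h : IsEvenlyCovered f x I) :
    ∀ᶠ y in 𝓝 x, Nat.card (f ⁻¹' {y}) = Nat.card (f ⁻¹' {x}) := by
  filter_upwards [h.eventually_isEvenlyCovered] with y hy
  rw [← Nat.card_congr hy.fiberHomeomorph.toEquiv, Nat.card_congr h.fiberHomeomorph.toEquiv]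

end IsEvenlyCovered

theorem IsPreconnected.apply_eq_of_eventually_eq {X β : Type*} [TopologicalSpace X]
    {s : Set X} (hs : IsPreconnected s) {g : X → β}
    (hg : ∀ x ∈ s, ∀ᶠ y in 𝓝 x, g y = g x) {x y : X} (hx : x ∈ s) (hy : y ∈ s) :
    g y = g x := by
  let _ : TopologicalSpace β := ⊥
  have : DiscreteTopology β := ⟨rfl⟩
  have hcont : ContinuousOn g s := fun z hz => by
    refine ContinuousAt.continuousWithinAt ?_
    rw [ContinuousAt, nhds_discrete β, tendsto_pure]
    exact hg z hz
  exact hs.constant hcont hy hx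

theorem IsCoveringMapOn.natCard_preimage_singleton_eq_of_mem_connectedComponentIn
    {E X : Type*} [TopologicalSpace E] [TopologicalSpace X] {f : E → X} {s : Set X}
    (hf : IsCoveringMapOn f s) {x y : X} (hx : x ∈ s) (hy : y ∈ connectedComponentIn s x) :
    Nat.card (f ⁻¹' {y}) = Nat.card (f ⁻¹' {x}) :=
  isPreconnected_connectedComponentIn.apply_eq_of_eventually_eq
    (fun z hz =>
      (hf z (connectedComponentIn_subset s x hz)).eventually_natCard_preimage_singleton_eq)
    (mem_connectedComponentIn hx) hy

/-- For a proper `C¹` map `F : ℝ² → ℝ²` with finite fibers, the number of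
preimages is locally constant on the complement of `F(C)`, where `C` is the set
of critical points; in particular it is constant on each connected component. -/
theorem stmt_8 (F : ℝ × ℝ → ℝ × ℝ) (hC1 : ContDiff ℝ 1 F)
    (hproper : ∀ K : Set (ℝ × ℝ), IsCompact K → IsCompact (F ⁻¹' K))
    (hfin : ∀ w : ℝ × ℝ, (F ⁻¹' {w}).Finite)
    (C : Set (ℝ × ℝ))
    (hC : C = {p : ℝ × ℝ | LinearMap.det ((fderiv ℝ F p) : (ℝ × ℝ) →ₗ[ℝ] (ℝ × ℝ)) = 0}) :
    (∀ w ∈ (F '' C)ᶜ, ∃ U ∈ nhds w, ∀ w' ∈ U ∩ (F '' C)ᶜ,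
        Nat.card (F ⁻¹' {w'}) = Nat.card (F ⁻¹' {w})) ∧
      ∀ w ∈ (F '' C)ᶜ, ∀ w' ∈ connectedComponentIn (F '' C)ᶜ w,
        Nat.card (F ⁻¹' {w'}) = Nat.card (F ⁻¹' {w}) := by
  have hclosed : IsClosedMap F :=
    (isProperMap_iff_isCompact_preimage.2 ⟨hC1.continuous, fun K hK => hproper K hK⟩).isClosedMap
  have hlocal : IsLocalHomeomorphOn F (F ⁻¹' (F '' C)ᶜ) :=
    hC1.isLocalHomeomorphOn_det_fderiv_ne_zero.mono fun p hp hdet =>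
      hp ⟨p, hC ▸ hdet, rfl⟩
  have hcover : IsCoveringMapOn F (F '' C)ᶜ :=
    hclosed.isCoveringMapOn_of_isLocalHomeomorphOn (fun w _ => hfin w) hlocal
  exact ⟨fun w hw => ⟨_, (hcover w hw).eventually_natCard_preimage_singleton_eq, fun _ h => h.1⟩,
    fun w hw w' hw' => hcover.natCard_preimage_singleton_eq_of_mem_connectedComponentIn hw hw'⟩
end

section
/- Let X, Y be nonempty connected open subsets of ℝ², and let F : X → Y be a C¹ map with everywhere invertible Jacobian, which is proper as a map from X to Y, and surjective with all fibers of the same finite cardinality k > 0. Then F : X → Y is a covering map. -/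
/-!
By the inverse function theorem `F` is a local diffeomorphism on `X`, so `F : X → Y` is a local
homeomorphism. A proper local homeomorphism is a closed map whose fibres are compact and
discrete, hence finite; disjoint neighbourhoods of the finitely many points of a fibre, shrunk
so that `F` is injective on each, then map onto a common evenly covered neighbourhood.
-/

open Topology

theorem IsProperMap.isCoveringMap_of_isLocalHomeomorph {E B : Type*} [TopologicalSpace E]
    [TopologicalSpace B] [T2Space E] {f : E → B} (hp : IsProperMap f)
    (hl : IsLocalHomeomorph f) : IsCoveringMap f := by
  have hfin (b : B) : (f ⁻¹' {b}).Finite :=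
    (hp.isCompact_preimage isCompact_singleton).finite <|
      .of_openPartialHomeomorph f subset_rfl fun e _ ↦
        let ⟨φ, he, hφ⟩ := hl e; ⟨φ, he, hφ.symm⟩
  rw [isCoveringMap_iff_isCoveringMapOn_univ]
  exact hp.isClosedMap.isCoveringMapOn_of_isLocalHomeomorphOn (fun b _ ↦ hfin b)
    hl.isLocalHomeomorphOn

theorem isLocalHomeomorphOn_of_hasStrictFDerivAt {𝕜 E F : Type*} [NontriviallyNormedField 𝕜]
    [NormedAddCommGroup E] [NormedSpace 𝕜 E] [CompleteSpace E]
    [NormedAddCommGroup F] [NormedSpace 𝕜 F] {f : E → F} {s : Set E}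
    (hf : ∀ x ∈ s, ∃ L : E ≃L[𝕜] F, HasStrictFDerivAt f (L : E →L[𝕜] F) x) :
    IsLocalHomeomorphOn f s := fun x hx ↦
  let ⟨_, hL⟩ := hf x hx
  ⟨hL.toOpenPartialHomeomorph f, hL.mem_toOpenPartialHomeomorph_source,
    hL.toOpenPartialHomeomorph_coe.symm⟩

namespace Set.MapsTo

variable {α β : Type*} [TopologicalSpace α] [TopologicalSpace β] {f : α → β} {s : Set α}
  {t : Set β}

theorem isLocalHomeomorph_restrict (h : MapsTo f s t) (hs : IsOpen s) (ht : IsOpen t)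
    (hf : IsLocalHomeomorphOn f s) : IsLocalHomeomorph (h.restrict f s t) := by
  have hcomp : IsLocalHomeomorph (Subtype.val ∘ h.restrict f s t) :=
    isLocalHomeomorph_iff_isLocalHomeomorphOn_univ.mpr <|
      hf.comp hs.isOpenEmbedding_subtypeVal.isLocalHomeomorph.isLocalHomeomorphOn
        fun x _ ↦ x.2
  exact hcomp.of_comp ht.isOpenEmbedding_subtypeVal.isLocalHomeomorph
    (hf.continuousOn.mapsToRestrict h)

theorem isProperMap_restrict [T2Space β] [CompactlyCoherentSpace t] (h : MapsTo f s t)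
    (hf : ContinuousOn f s) (hK : ∀ K ⊆ t, IsCompact K → IsCompact (s ∩ f ⁻¹' K)) :
    IsProperMap (h.restrict f s t) := by
  refine isProperMap_iff_isCompact_preimage.mpr ⟨hf.mapsToRestrict h, fun K hKc ↦ ?_⟩
  have hpre : h.restrict f s t ⁻¹' K = Subtype.val ⁻¹' (f ⁻¹' (Subtype.val '' K)) := by
    ext x
    simp [MapsTo.restrict, Subtype.map, h x.2]
  rw [hpre, IsEmbedding.subtypeVal.isCompact_iff, Subtype.image_preimage_coe]
  exact hK _ (Subtype.coe_image_subset t K) (hKc.image continuous_subtype_val)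

end Set.MapsTo

theorem stmt_9_general (X Y : Set (ℝ × ℝ)) (hXo : IsOpen X) (hYo : IsOpen Y)
    (F : ℝ × ℝ → ℝ × ℝ) (hmaps : Set.MapsTo F X Y)
    (hC1 : ContDiffOn ℝ 1 F X)
    (hreg : ∀ p ∈ X,
      ∃ L : (ℝ × ℝ) ≃L[ℝ] (ℝ × ℝ), HasFDerivAt F (L : (ℝ × ℝ) →L[ℝ] (ℝ × ℝ)) p)
    (hproper : ∀ K : Set (ℝ × ℝ), K ⊆ Y → IsCompact K → IsCompact (X ∩ F ⁻¹' K)) :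
    IsCoveringMap (Set.MapsTo.restrict F X Y hmaps) := by
  have hstrict : ∀ p ∈ X,
      ∃ L : (ℝ × ℝ) ≃L[ℝ] (ℝ × ℝ), HasStrictFDerivAt F (L : (ℝ × ℝ) →L[ℝ] (ℝ × ℝ)) p := by
    intro p hp
    obtain ⟨L, hL⟩ := hreg p hp
    exact ⟨L, (hC1.contDiffAt (hXo.mem_nhds hp)).hasStrictFDerivAt' hL one_ne_zero⟩
  exact (hmaps.isProperMap_restrict hC1.continuousOn hproper).isCoveringMap_of_isLocalHomeomorph
    (hmaps.isLocalHomeomorph_restrict hXo hYo (isLocalHomeomorphOn_of_hasStrictFDerivAt hstrict))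

/-- A `C¹` map with everywhere invertible Jacobian between nonempty connected
open subsets of `ℝ²`, proper as a map `X → Y`, surjective with all fibers of the
same finite cardinality `k > 0`, is a covering map. -/
theorem stmt_9 (X Y : Set (ℝ × ℝ)) (hXo : IsOpen X) (hYo : IsOpen Y)
    (hXc : IsConnected X) (hYc : IsConnected Y)
    (F : ℝ × ℝ → ℝ × ℝ) (hmaps : Set.MapsTo F X Y)
    (hC1 : ContDiffOn ℝ 1 F X)
    (hreg : ∀ p ∈ X,
      ∃ L : (ℝ × ℝ) ≃L[ℝ] (ℝ × ℝ), HasFDerivAt F (L : (ℝ × ℝ) →L[ℝ] (ℝ × ℝ)) p)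
    (hproper : ∀ K : Set (ℝ × ℝ), K ⊆ Y → IsCompact K → IsCompact (X ∩ F ⁻¹' K))
    (k : ℕ) (hk : 0 < k)
    (hfib : ∀ y ∈ Y, Nat.card ({p ∈ X | F p = y} : Set (ℝ × ℝ)) = k) :
    IsCoveringMap (Set.MapsTo.restrict F X Y hmaps) :=
  stmt_9_general X Y hXo hYo F hmaps hC1 hreg hproper
end

section
/- Let θ₀, θ₁ : [0, 2π] → ℝ be continuous functions with θ₀(2π) − θ₀(0) = θ₁(2π) − θ₁(0) = 2πn for a nonzero integer n. For s ∈ [0,1] let θ_s = (1−s)θ₀ + sθ₁ and X(s,t) = (cos θ_s(t), sin θ_s(t)), m(s) = (1/2π)∫₀^{2π} X(s,t) dt. Then |m(s)| < 1 for every s ∈ [0,1]. -/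
/-!
The integrand `t ↦ exp (i θ_s t)` takes values in the unit circle, so by strict convexity of `ℂ`
its integral over `[0, 2π]` has norm `< 2π` unless it is constant there. It is not constant:
`θ_s` still changes by `2πn` with `n ≠ 0`, so by the intermediate value theorem it reaches
`θ_s 0 ± π`, where the integrand is the antipode of its value at `0`.
-/

open Real Set MeasureTheory

theorem norm_intervalIntegral_lt_of_ne {E : Type*} [NormedAddCommGroup E]
    [NormedSpace ℝ E] [CompleteSpace E] [StrictConvexSpace ℝ E] {f : ℝ → E} {a b C : ℝ}
    (hf : ContinuousOn f (Icc a b))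
    (hC : ∀ t ∈ Icc a b, ‖f t‖ ≤ C) {t₁ t₂ : ℝ} (ht₁ : t₁ ∈ Icc a b) (ht₂ : t₂ ∈ Icc a b)
    (hne : f t₁ ≠ f t₂) : ‖∫ t in a..b, f t‖ < (b - a) * C := by
  have hab : a ≤ b := ht₁.1.trans ht₁.2
  have hab' : a ≠ b := by
    rintro rfl
    rw [Icc_self, mem_singleton_iff] at ht₁ ht₂
    exact hne (by rw [ht₁, ht₂])
  rw [intervalIntegral.integral_of_le hab, ← integral_Icc_eq_integral_Ioc,
    ← Real.volume_real_Icc_of_le hab]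
  refine (ae_eq_const_or_norm_setIntegral_lt_of_norm_le_const (by simp)
    (ae_restrict_of_forall_mem measurableSet_Icc hC)).resolve_left fun hconst => ?_
  have := Measure.eqOn_Icc_of_ae_eq volume hab' hconst hf continuousOn_const
  exact hne ((this ht₁).trans (this ht₂).symm)

theorem exists_mem_Icc_exp_mul_I_eq_neg {θ : ℝ → ℝ} {a b : ℝ} (hab : a ≤ b)
    (hθ : ContinuousOn θ (Icc a b)) (hπ : π ≤ |θ b - θ a|) :
    ∃ t ∈ Icc a b, Complex.exp (θ t * Complex.I) = -Complex.exp (θ a * Complex.I) := by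
  obtain ⟨c, hc, hmem⟩ : ∃ c : ℝ, Complex.exp (c * Complex.I) = -1 ∧
      θ a + c ∈ uIcc (θ a) (θ b) := by
    rcases le_abs'.1 hπ with hneg | hpos
    · refine ⟨-π, by simp [neg_mul, Complex.exp_neg], ?_⟩
      rw [mem_uIcc]
      right
      constructor <;> linarith [pi_pos]
    · refine ⟨π, Complex.exp_pi_mul_I, ?_⟩
      rw [mem_uIcc]
      left
      constructor <;> linarith [pi_pos]
  obtain ⟨t, ht, hθt⟩ := intermediate_value_uIcc (by rwa [uIcc_of_le hab]) hmem
  refine ⟨t, by rwa [uIcc_of_le hab] at ht, ?_⟩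
  rw [hθt, Complex.ofReal_add, add_mul, Complex.exp_add, hc, mul_neg_one]

theorem stmt_13_general (θ₀ θ₁ : ℝ → ℝ)
    (h₀ : ContinuousOn θ₀ (Icc 0 (2 * π))) (h₁ : ContinuousOn θ₁ (Icc 0 (2 * π)))
    (n : ℤ) (hn : n ≠ 0)
    (hΔ₀ : θ₀ (2 * π) - θ₀ 0 = 2 * π * n) (hΔ₁ : θ₁ (2 * π) - θ₁ 0 = 2 * π * n)
    (s : ℝ)
    (m : ℂ)
    (hm : m = (1 / (2 * π) : ℝ) *
      ∫ t in (0:ℝ)..(2 * π), Complex.exp ((((1 - s) * θ₀ t + s * θ₁ t : ℝ) : ℂ) * Complex.I)) :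
    ‖m‖ < 1 := by
  set θ : ℝ → ℝ := fun t => (1 - s) * θ₀ t + s * θ₁ t
  have hθ : ContinuousOn θ (Icc 0 (2 * π)) :=
    (continuousOn_const.mul h₀).add (continuousOn_const.mul h₁)
  have hΔ : θ (2 * π) - θ 0 = 2 * π * n := by
    linear_combination (1 - s) * hΔ₀ + s * hΔ₁
  have hπ : π ≤ |θ (2 * π) - θ 0| := by
    have : (1 : ℝ) ≤ |(n : ℝ)| := by exact_mod_cast Int.one_le_abs hn
    rw [hΔ, abs_mul, abs_of_pos two_pi_pos]
    nlinarith [pi_pos]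
  obtain ⟨t, ht, hantipodal⟩ := exists_mem_Icc_exp_mul_I_eq_neg two_pi_pos.le hθ hπ
  have hcont : ContinuousOn (fun t => Complex.exp (θ t * Complex.I)) (Icc 0 (2 * π)) :=
    Complex.continuous_exp.comp_continuousOn
      ((Complex.continuous_ofReal.comp_continuousOn hθ).mul continuousOn_const)
  have hlt := norm_intervalIntegral_lt_of_ne (C := 1) hcont
    (fun t _ => (Complex.norm_exp_ofReal_mul_I (θ t)).le) ht (left_mem_Icc.2 two_pi_pos.le)
    (by rw [hantipodal]; exact neg_ne_self.2 (Complex.exp_ne_zero _))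
  rw [sub_zero, mul_one] at hlt
  rw [hm, norm_mul, Complex.norm_real, Real.norm_eq_abs, abs_of_pos (by positivity)]
  calc 1 / (2 * π) * ‖∫ t in (0:ℝ)..(2 * π), Complex.exp (θ t * Complex.I)‖
      < 1 / (2 * π) * (2 * π) := by gcongr
    _ = 1 := by field_simp

/-- Key estimate in the Whitney–Graustein proof: the average over `[0,2π]` of the
unit vectors `X(s,t) = e^{iθ_s(t)}`, where `θ_s = (1-s)θ₀ + sθ₁` and both `θ₀`,
`θ₁` have total change `2πn` with `n ≠ 0`, has norm strictly less than `1`. -/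
theorem stmt_13 (θ₀ θ₁ : ℝ → ℝ)
    (h₀ : ContinuousOn θ₀ (Icc 0 (2 * π))) (h₁ : ContinuousOn θ₁ (Icc 0 (2 * π)))
    (n : ℤ) (hn : n ≠ 0)
    (hΔ₀ : θ₀ (2 * π) - θ₀ 0 = 2 * π * n) (hΔ₁ : θ₁ (2 * π) - θ₁ 0 = 2 * π * n)
    (s : ℝ) (hs : s ∈ Icc (0:ℝ) 1)
    (m : ℂ)
    (hm : m = (1 / (2 * π) : ℝ) *
      ∫ t in (0:ℝ)..(2 * π), Complex.exp ((((1 - s) * θ₀ t + s * θ₁ t : ℝ) : ℂ) * Complex.I)) :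
    ‖m‖ < 1 :=
  stmt_13_general θ₀ θ₁ h₀ h₁ n hn hΔ₀ hΔ₁ s m hm
end

section
/- Let F : ℝ² → ℝ² be an affine map F(v) = q + A·v with A an invertible 2×2 matrix, and let γ(t) = p + ρ(cos t, sin t) be a positively oriented circle. Then the rotation number of the regular closed curve F ∘ γ equals sgn(det A). -/
/-!
Write the real-linear map as `A z = a z + b conj z`, so that `det A = ‖a‖² - ‖b‖²` and the
derivative of `F ∘ γ` is `iρ (a e^{it} - b e^{-it})`. The term of larger modulus (`a` when
`det A > 0`, `b` when `det A < 0`) turns once around `0` in its own direction; dividing it out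
leaves `1 + w e^{∓2it}` with `‖w‖ < 1`, which stays in the right half-plane, so its principal
argument is a continuous periodic lift. Two continuous lifts of the same curve differ by a constant in `2πℤ`.
-/

open Real Set Complex ComplexConjugate

theorem IsPreconnected.sub_eq_sub_of_exp_mul_I_eq {X : Type*} [TopologicalSpace X] {S : Set X}
    (hS : IsPreconnected S) {θ₁ θ₂ : X → ℝ} (h₁ : ContinuousOn θ₁ S) (h₂ : ContinuousOn θ₂ S)
    (hexp : ∀ x ∈ S, exp (θ₁ x * I) = exp (θ₂ x * I)) {x y : X} (hx : x ∈ S) (hy : y ∈ S) :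
    θ₁ y - θ₁ x = θ₂ y - θ₂ x := by
  have hmaps : MapsTo (θ₁ - θ₂) S (AddSubgroup.zmultiples (2 * π)) := by
    intro z hz
    obtain ⟨n, hn⟩ := Circle.exp_eq_exp.1 (Circle.ext (by simpa using hexp z hz))
    exact ⟨n, by simp [hn]⟩
  have hconst := hS.constant_of_mapsTo (isDiscrete_iff_discreteTopology.2
    (inferInstanceAs (DiscreteTopology (AddSubgroup.zmultiples (2 * π)))))
    (h₁.sub h₂) hmaps hx hy
  simp only [Pi.sub_apply] at hconst
  linarith

theorem arg_lift_sub_eq_of_eq_mul_slitPlane {f g : ℝ → ℂ} {α : ℂ} {ω a b : ℝ} (hab : a ≤ b)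
    (hα : α ≠ 0) (hg : ContinuousOn g (Icc a b)) (hg_mem : ∀ t ∈ Icc a b, g t ∈ slitPlane)
    (hf : ∀ t ∈ Icc a b, f t = α * exp (↑(ω * t) * I) * g t) {θ : ℝ → ℝ}
    (hθ : ContinuousOn θ (Icc a b))
    (harg : ∀ t ∈ Icc a b, f t = ‖f t‖ * exp (θ t * I)) :
    θ b - θ a = ω * (b - a) + (arg (g b) - arg (g a)) := by
  set θ₀ : ℝ → ℝ := fun t => ω * t + arg α + arg (g t)
  have hθ₀ : ContinuousOn θ₀ (Icc a b) := by
    refine ((continuousOn_const.mul continuousOn_id).add continuousOn_const).add ?_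
    exact fun t ht => (continuousAt_arg (hg_mem t ht)).comp_continuousWithinAt (hg t ht)
  have hlift : ∀ t ∈ Icc a b, f t = ‖f t‖ * exp (θ₀ t * I) := by
    intro t ht
    conv_lhs => rw [hf t ht, ← norm_mul_exp_arg_mul_I α, ← norm_mul_exp_arg_mul_I (g t)]
    rw [hf t ht]
    simp only [θ₀, norm_mul, norm_exp_ofReal_mul_I, mul_one]
    push_cast
    simp only [add_mul, Complex.exp_add]
    ring
  have hf0 : ∀ t ∈ Icc a b, (‖f t‖ : ℂ) ≠ 0 := fun t ht => by
    rw [hf t ht]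
    simpa using ⟨hα, slitPlane_ne_zero (hg_mem t ht)⟩
  have hsub := isPreconnected_Icc.sub_eq_sub_of_exp_mul_I_eq hθ hθ₀
    (fun t ht => mul_left_cancel₀ (hf0 t ht) ((harg t ht).symm.trans (hlift t ht)))
    (left_mem_Icc.2 hab) (right_mem_Icc.2 hab)
  rw [hsub]
  ring

theorem arg_lift_sub_eq_two_pi_mul_of_norm_lt {f : ℝ → ℂ} {α β : ℂ} (hβα : ‖β‖ < ‖α‖) (n : ℤ)
    (hf : ∀ t, f t = α * exp (↑(n * t) * I) + β * exp (↑(-(n * t)) * I)) {θ : ℝ → ℝ}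
    (hθ : ContinuousOn θ (Icc 0 (2 * π)))
    (harg : ∀ t ∈ Icc 0 (2 * π), f t = ‖f t‖ * exp (θ t * I)) :
    θ (2 * π) - θ 0 = 2 * π * n := by
  have hα : α ≠ 0 := norm_pos_iff.1 ((norm_nonneg β).trans_lt hβα)
  set g : ℝ → ℂ := fun t => 1 + β / α * exp (↑(-2 * n * t) * I)
  have hg_mem : ∀ t, g t ∈ slitPlane := fun t => mem_slitPlane_of_norm_lt_one <| by
    rw [norm_mul, norm_exp_ofReal_mul_I, mul_one, norm_div, div_lt_one (norm_pos_iff.2 hα)]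
    exact hβα
  have hg : Continuous g := by fun_prop
  have hfg : ∀ t, f t = α * exp (↑(n * t) * I) * g t := by
    intro t
    have hrot : exp (↑(n * t) * I) * exp (↑(-2 * n * t) * I) = exp (↑(-(n * t)) * I) := by
      rw [← Complex.exp_add]; push_cast; ring_nf
    rw [hf t, ← hrot]
    simp only [g]
    field_simp
  have hperiodic : g (2 * π) = g 0 := by
    have hone : exp (↑(-2 * n * (2 * π)) * I) = 1 := by
      rw [← Circle.coe_exp, show -2 * n * (2 * π) = ((-2 * n : ℤ) : ℝ) * (2 * π) by push_cast; ring,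
        Circle.exp_int_mul_two_pi, Circle.coe_one]
    simp only [g, hone, mul_zero, ofReal_zero, zero_mul, Complex.exp_zero]
  rw [arg_lift_sub_eq_of_eq_mul_slitPlane (by positivity) hα hg.continuousOn (fun t _ => hg_mem t)
    (fun t _ => hfg t) hθ harg, hperiodic]
  ring

theorem LinearMap.exists_apply_eq_mul_add_mul_conj (L : ℂ →ₗ[ℝ] ℂ) :
    ∃ a b : ℂ, (∀ z, L z = a * z + b * conj z) ∧ LinearMap.det L = ‖a‖ ^ 2 - ‖b‖ ^ 2 := by
  refine ⟨(L 1 - I * L I) / 2, (L 1 + I * L I) / 2, fun z => ?_, ?_⟩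
  · have hL : L z = z.re * L 1 + z.im * L I := by
      have := congrArg L (show z = z.re • (1 : ℂ) + z.im • I by
        rw [real_smul, real_smul, mul_one, re_add_im])
      rwa [map_add, map_smul, map_smul, real_smul, real_smul] at this
    have hconj : conj z = z.re - z.im * I := by apply Complex.ext <;> simp
    rw [hL, hconj]
    linear_combination (L 1 - I * L I) / 2 * re_add_im z + (z.im * L I) * I_sq
  · rw [← LinearMap.det_toMatrix basisOneI, Matrix.det_fin_two, Complex.sq_norm, Complex.sq_norm]
    simp [LinearMap.toMatrix_apply, normSq_apply]
    ring

theorem hasDerivAt_affine_comp_circle (L : ℂ →L[ℝ] ℂ) (q p : ℂ) (ρ t : ℝ) :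
    HasDerivAt ((fun v => q + L v) ∘ fun s : ℝ => p + ρ * exp (s * I))
      (L (ρ * I * exp (t * I))) t := by
  have hcircle : HasDerivAt (fun s : ℝ => p + ρ * exp (s * I)) (ρ * I * exp (t * I)) t := by
    have := (((ofRealCLM.hasDerivAt (x := t)).mul_const I).cexp.const_mul (ρ : ℂ)).const_add p
    simp only [ofRealCLM_apply, ofReal_one, one_mul] at this
    rwa [mul_assoc, mul_comm I]
  exact (L.hasFDerivAt.comp_hasDerivAt t hcircle).const_add q

/-- The image of a positively oriented circle under an invertible affine map
`F(v) = q + A·v` is a regular closed curve with rotation number `sgn (det A)`: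
any continuous argument function of the derivative of `F ∘ γ` changes by
`2π · sgn (det A)`. -/
theorem stmt_15 (A : ℂ ≃L[ℝ] ℂ) (q p : ℂ) (ρ : ℝ) (hρ : 0 < ρ)
    (F : ℂ → ℂ) (hF : F = fun v => q + A v)
    (γ : ℝ → ℂ) (hγ : γ = fun t : ℝ => p + (ρ : ℂ) * Complex.exp ((t : ℂ) * Complex.I))
    (θ : ℝ → ℝ) (hθ : ContinuousOn θ (Icc 0 (2 * π)))
    (harg : ∀ t ∈ Icc 0 (2 * π),
      deriv (F ∘ γ) t = (‖deriv (F ∘ γ) t‖ : ℂ) * Complex.exp ((θ t : ℂ) * Complex.I)) :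
    θ (2 * π) - θ 0 =
      2 * π * Real.sign (LinearMap.det ((A : ℂ →L[ℝ] ℂ) : ℂ →ₗ[ℝ] ℂ)) := by
  subst hF hγ
  obtain ⟨a, b, hA, hdet⟩ :=
    LinearMap.exists_apply_eq_mul_add_mul_conj ((A : ℂ →L[ℝ] ℂ) : ℂ →ₗ[ℝ] ℂ)
  have hderiv : ∀ t : ℝ, deriv ((fun v => q + A v) ∘ fun s : ℝ => p + ρ * exp (s * I)) t =
      ρ * I * a * exp (t * I) - ρ * I * b * exp (↑(-t) * I) := fun t => by
    refine (hasDerivAt_affine_comp_circle (A : ℂ →L[ℝ] ℂ) q p ρ t).deriv.trans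
      ((hA _).trans ?_)
    rw [map_mul, map_mul, conj_ofReal, conj_I, ← exp_conj, map_mul, conj_ofReal, conj_I]
    push_cast
    ring_nf
  have hnorm : ∀ c : ℂ, ‖ρ * I * c‖ = ρ * ‖c‖ := by simp [abs_of_pos hρ]
  have hdet_ne : LinearMap.det ((A : ℂ →L[ℝ] ℂ) : ℂ →ₗ[ℝ] ℂ) ≠ 0 := by
    simpa using (LinearEquiv.isUnit_det' A.toLinearEquiv).ne_zero
  rcases hdet_ne.lt_or_gt with hneg | hpos
  · have hab : ‖a‖ < ‖b‖ := lt_of_pow_lt_pow_left₀ 2 (norm_nonneg _) (by linarith)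
    rw [Real.sign_of_neg hneg]
    have hwind := arg_lift_sub_eq_two_pi_mul_of_norm_lt
      (α := -(ρ * I * b)) (β := ρ * I * a) (n := -1)
      (by rwa [norm_neg, hnorm, hnorm, mul_lt_mul_iff_right₀ hρ])
      (fun t => by rw [hderiv]; push_cast; ring_nf) hθ harg
    simpa using hwind
  · have hba : ‖b‖ < ‖a‖ := lt_of_pow_lt_pow_left₀ 2 (norm_nonneg _) (by linarith)
    rw [Real.sign_of_pos hpos]
    have hwind := arg_lift_sub_eq_two_pi_mul_of_norm_lt
      (α := ρ * I * a) (β := -(ρ * I * b)) (n := 1)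
      (by rwa [norm_neg, hnorm, hnorm, mul_lt_mul_iff_right₀ hρ])
      (fun t => by rw [hderiv]; push_cast; ring_nf) hθ harg
    simpa using hwind
end
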